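/- Consider a one-dimensional wireless network with n ≥ 2 distinct stations at positions x₁,…,x_n ∈ ℝ, powers P₁,…,P_n > 0, noise N ≥ 0, threshold β ≥ 1 and path-loss exponent 2, and suppose station s₁ has the lowest transmission power, i.e. P₁ = min{P_i : 1 ≤ i ≤ n}. Then the reception zone H₁ of s₁ is a connected subset of ℝ. -/
import Mathlib


open Finset

/-- SINR of station `i` at point `t` in a one-dimensional network with
positions `x`, powers `P`, noise `N` and path-loss exponent 2. -/
noncomputable def sinr1 {n : ℕ} (x P : Fin n → ℝ) (N : ℝ) (i : Fin n) (t : ℝ) : ℝ :=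
  (P i / (t - x i) ^ 2) /
    ((∑ j ∈ Finset.univ.erase i, P j / (t - x j) ^ 2) + N)

/-- The reception zone of station `i` in a one-dimensional network. -/
noncomputable def recZone1 {n : ℕ} (x P : Fin n → ℝ) (N β : ℝ) (i : Fin n) : Set ℝ :=
  {t | (∀ j, t ≠ x j) ∧ β ≤ sinr1 x P N i t} ∪ {x i}

private lemma sq_pos_aux {u : ℝ} (h : u ≠ 0) : 0 < u ^ 2 := by
  rw [← sq_abs]; exact pow_pos (abs_pos.mpr h) 2

/-- Monotonicity of the interference factor: for `t ≤ s ≤ a` and an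
interferer at `c` with `c < t` or `a < c`, the factor at `s` is at most
the factor at `t`. -/
private lemma mono_aux (a c t s : ℝ) (hts : t ≤ s) (hsa : s ≤ a)
    (hc : c < t ∨ a < c) :
    (s - a) ^ 2 / (s - c) ^ 2 ≤ (t - a) ^ 2 / (t - c) ^ 2 := by
  have hsc : (s - c) ≠ 0 := by rcases hc with h | h <;> intro e <;>
    (have : s = c := by linarith) <;> simp_all <;> linarith
  have htc : (t - c) ≠ 0 := by rcases hc with h | h <;> intro e <;>
    (have : t = c := by linarith) <;> simp_all <;> linarith
  rw [div_le_div_iff₀ (sq_pos_aux hsc) (sq_pos_aux htc)]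
  rcases hc with h | h
  · have h1 : 0 ≤ (a - s) * (t - c) := mul_nonneg (by linarith) (by linarith)
    have h2 : (a - s) * (t - c) ≤ (a - t) * (s - c) := by nlinarith
    nlinarith [pow_le_pow_left₀ h1 h2 2]
  · have h1 : 0 ≤ (a - s) * (c - t) := mul_nonneg (by linarith) (by linarith)
    have h2 : (a - s) * (c - t) ≤ (a - t) * (c - s) := by nlinarith
    nlinarith [pow_le_pow_left₀ h1 h2 2]

private lemma erase_nonempty_aux {n : ℕ} (hn : 2 ≤ n) (i : Fin n) :
    (Finset.univ.erase i).Nonempty := by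
  apply Finset.card_pos.1
  rw [Finset.card_erase_of_mem (Finset.mem_univ i), Finset.card_univ, Fintype.card_fin]
  omega

private lemma denom_pos_aux {n : ℕ} (hn : 2 ≤ n) (x P : Fin n → ℝ)
    (hP : ∀ j, 0 < P j) (N : ℝ) (hN : 0 ≤ N) (i : Fin n) (t : ℝ)
    (ht : ∀ j, t ≠ x j) :
    0 < (∑ j ∈ Finset.univ.erase i, P j / (t - x j) ^ 2) + N := by
  have hsum : 0 < ∑ j ∈ Finset.univ.erase i, P j / (t - x j) ^ 2 :=
    Finset.sum_pos (fun j _ => div_pos (hP j) (sq_pos_aux (sub_ne_zero.mpr (ht j))))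
      (erase_nonempty_aux hn i)
  linarith

/-- Membership in the SINR condition is equivalent to a polynomial-style
inequality once we clear denominators. -/
private lemma mem_iff_aux {n : ℕ} (hn : 2 ≤ n) (x P : Fin n → ℝ)
    (hP : ∀ j, 0 < P j) (N β : ℝ) (hN : 0 ≤ N) (i : Fin n) (t : ℝ)
    (ht : ∀ j, t ≠ x j) :
    (β ≤ sinr1 x P N i t ↔
      β * ((∑ j ∈ Finset.univ.erase i, P j * ((t - x i) ^ 2 / (t - x j) ^ 2))
        + N * (t - x i) ^ 2) ≤ P i) := by
  have hD : 0 < (∑ j ∈ Finset.univ.erase i, P j / (t - x j) ^ 2) + N :=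
    denom_pos_aux hn x P hP N hN i t ht
  have hsq : 0 < (t - x i) ^ 2 := sq_pos_aux (sub_ne_zero.mpr (ht i))
  unfold sinr1
  rw [le_div_iff₀ hD, le_div_iff₀ hsq]
  have hF : ((∑ j ∈ Finset.univ.erase i, P j / (t - x j) ^ 2) + N) * (t - x i) ^ 2
      = (∑ j ∈ Finset.univ.erase i, P j * ((t - x i) ^ 2 / (t - x j) ^ 2))
        + N * (t - x i) ^ 2 := by
    rw [add_mul, Finset.sum_mul]
    congr 1
    exact Finset.sum_congr rfl fun j _ => by ring
  rw [mul_assoc, hF]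

/-- A point in the reception zone of the weakest station is at least as
close to it as to any other station. -/
private lemma close_aux {n : ℕ} (hn : 2 ≤ n) (x P : Fin n → ℝ)
    (hP : ∀ j, 0 < P j) (N β : ℝ) (hN : 0 ≤ N) (hβ : 1 ≤ β) (i : Fin n)
    (hmin : ∀ j, P i ≤ P j) (t : ℝ) (ht : ∀ j, t ≠ x j)
    (hsinr : β ≤ sinr1 x P N i t) (j : Fin n) (hj : j ≠ i) :
    (t - x i) ^ 2 ≤ (t - x j) ^ 2 := by
  have hD : 0 < (∑ k ∈ Finset.univ.erase i, P k / (t - x k) ^ 2) + N :=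
    denom_pos_aux hn x P hP N hN i t ht
  have hsq : 0 < (t - x i) ^ 2 := sq_pos_aux (sub_ne_zero.mpr (ht i))
  have hsqj : 0 < (t - x j) ^ 2 := sq_pos_aux (sub_ne_zero.mpr (ht j))
  have h1 : β * ((∑ k ∈ Finset.univ.erase i, P k / (t - x k) ^ 2) + N)
      ≤ P i / (t - x i) ^ 2 := by
    have := hsinr
    unfold sinr1 at this
    rw [le_div_iff₀ hD] at this
    exact this
  have h2 : P j / (t - x j) ^ 2
      ≤ (∑ k ∈ Finset.univ.erase i, P k / (t - x k) ^ 2) + N := by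
    have hmem : j ∈ Finset.univ.erase i := Finset.mem_erase.mpr ⟨hj, Finset.mem_univ j⟩
    have hsingle : P j / (t - x j) ^ 2
        ≤ ∑ k ∈ Finset.univ.erase i, P k / (t - x k) ^ 2 :=
      Finset.single_le_sum
        (fun k _ => le_of_lt (div_pos (hP k) (sq_pos_aux (sub_ne_zero.mpr (ht k))))) hmem
    linarith
  have h3 : P i / (t - x j) ^ 2 ≤ P i / (t - x i) ^ 2 := by
    have hPij : P i / (t - x j) ^ 2 ≤ P j / (t - x j) ^ 2 := by
      gcongr
      exact hmin j
    have hb : P j / (t - x j) ^ 2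
        ≤ β * ((∑ k ∈ Finset.univ.erase i, P k / (t - x k) ^ 2) + N) := by
      nlinarith
    linarith
  rw [div_le_div_iff₀ hsqj hsq] at h3
  exact le_of_mul_le_mul_left h3 (hP i)

/-- If `t` is in the zone and `t ≤ s ≤ x i`, then `s` is in the zone. -/
private lemma between_aux {n : ℕ} (hn : 2 ≤ n) (x P : Fin n → ℝ)
    (hx : Function.Injective x) (hP : ∀ j, 0 < P j)
    (N β : ℝ) (hN : 0 ≤ N) (hβ : 1 ≤ β) (i : Fin n)
    (hmin : ∀ j, P i ≤ P j) (t s : ℝ)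
    (ht : t ∈ recZone1 x P N β i) (hts : t ≤ s) (hsa : s ≤ x i) :
    s ∈ recZone1 x P N β i := by
  by_cases hs : s = x i
  · exact Or.inr hs
  have hsa' : s < x i := lt_of_le_of_ne hsa hs
  rcases ht with ⟨htj, hsinr⟩ | hta
  · -- `t` satisfies the SINR condition
    have hta : t < x i := lt_of_le_of_lt hts hsa'
    -- every other station is either left of `t` or right of `x i`
    have hside : ∀ j, j ≠ i → x j < t ∨ x i < x j := by
      intro j hj
      have h2 := close_aux hn x P hP N β hN hβ i hmin t htj hsinr j hj
      by_contra hcon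
      push_neg at hcon
      obtain ⟨h3, h4⟩ := hcon
      have hne : x j ≠ x i := fun e => hj (hx e)
      have hxja : x j < x i := lt_of_le_of_ne h4 hne
      nlinarith [mul_pos (sub_pos.mpr hxja) (by linarith : (0:ℝ) < x j + x i - 2 * t)]
    -- `s` avoids all stations
    have hsj : ∀ j, s ≠ x j := by
      intro j
      by_cases hj : j = i
      · rw [hj]; exact ne_of_lt hsa'
      · rcases hside j hj with h | h
        · exact fun e => absurd (e ▸ h) (by linarith)
        · exact fun e => absurd (e ▸ h) (by linarith)
    left
    refine ⟨hsj, ?_⟩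
    rw [mem_iff_aux hn x P hP N β hN i s hsj]
    have hkey := (mem_iff_aux hn x P hP N β hN i t htj).mp hsinr
    -- interference at `s` is at most interference at `t`
    have hsum : ∑ j ∈ Finset.univ.erase i, P j * ((s - x i) ^ 2 / (s - x j) ^ 2)
        ≤ ∑ j ∈ Finset.univ.erase i, P j * ((t - x i) ^ 2 / (t - x j) ^ 2) := by
      apply Finset.sum_le_sum
      intro j hj
      have hji : j ≠ i := (Finset.mem_erase.mp hj).1
      exact mul_le_mul_of_nonneg_left
        (mono_aux (x i) (x j) t s hts hsa (hside j hji)) (hP j).le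
    have hNterm : N * (s - x i) ^ 2 ≤ N * (t - x i) ^ 2 :=
      mul_le_mul_of_nonneg_left (by nlinarith) hN
    have hβ0 : 0 ≤ β := by linarith
    calc β * ((∑ j ∈ Finset.univ.erase i, P j * ((s - x i) ^ 2 / (s - x j) ^ 2))
          + N * (s - x i) ^ 2)
        ≤ β * ((∑ j ∈ Finset.univ.erase i, P j * ((t - x i) ^ 2 / (t - x j) ^ 2))
          + N * (t - x i) ^ 2) :=
          mul_le_mul_of_nonneg_left (by linarith) hβ0
      _ ≤ P i := hkey
  · -- `t = x i`, impossible since `t < x i`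
    have : t = x i := hta
    linarith [lt_of_le_of_lt hts hsa']

/-- Reflection symmetry of the reception zone. -/
private lemma neg_aux {n : ℕ} (x P : Fin n → ℝ) (N β : ℝ) (i : Fin n) (t : ℝ) :
    t ∈ recZone1 x P N β i ↔ -t ∈ recZone1 (fun j => -x j) P N β i := by
  have h : ∀ c : ℝ, (-t - -c) ^ 2 = (t - c) ^ 2 := fun c => by ring
  unfold recZone1 sinr1
  simp only [Set.mem_union, Set.mem_setOf_eq, Set.mem_singleton_iff, h, ne_eq, neg_inj]

theorem weakest_station_zone_connected {n : ℕ} (hn : 2 ≤ n)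
    (x : Fin n → ℝ) (hx : Function.Injective x)
    (P : Fin n → ℝ) (hP : ∀ j, 0 < P j)
    (N β : ℝ) (hN : 0 ≤ N) (hβ : 1 ≤ β)
    (i : Fin n) (hmin : ∀ j, P i ≤ P j) :
    IsConnected (recZone1 x P N β i) := by
  have hmem : x i ∈ recZone1 x P N β i := Or.inr rfl
  have hOrd : (recZone1 x P N β i).OrdConnected := by
    refine ⟨fun t₁ h₁ t₂ h₂ s hs => ?_⟩
    rcases le_total s (x i) with hcase | hcase
    · exact between_aux hn x P hx hP N β hN hβ i hmin t₁ s h₁ hs.1 hcase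
    · have hx' : Function.Injective (fun j => -x j) := fun a b hab =>
        hx (neg_inj.mp hab)
      have h₂' : -t₂ ∈ recZone1 (fun j => -x j) P N β i :=
        (neg_aux x P N β i t₂).mp h₂
      have := between_aux hn (fun j => -x j) P hx' hP N β hN hβ i hmin
        (-t₂) (-s) h₂' (by linarith [hs.2]) (by simpa using neg_le_neg hcase)
      exact (neg_aux x P N β i s).mpr this
  exact ⟨⟨x i, hmem⟩, hOrd.isPreconnected⟩
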